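/- arXiv:1310.7397 — 4 statements merged into one kernel-verified Lean document; each statement's English description precedes it below -/
import Mathlib

section
/- If the state (Q, V) of a MutexQueue is reachable (i.e., not the broken state ⊥), then every process in the visible set V also appears in the queue sequence Q. -/
/-- One step of the MutexQueue transition function (non-broken transitions only). -/
inductive MQStep (N : ℕ) :
    (List (Fin N) × Finset (Fin N)) → (List (Fin N) × Finset (Fin N)) → Prop
  | enqueue (Q : List (Fin N)) (V : Finset (Fin N)) (p : Fin N) :
      p ∉ Q → MQStep N (Q, V) (Q ++ [p], V)
  | isHead (Q : List (Fin N)) (V : Finset (Fin N)) (p : Fin N) :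
      p ∈ Q → p ∉ V → MQStep N (Q, V) (Q, insert p V)
  | dequeue (Q : List (Fin N)) (V : Finset (Fin N)) (p : Fin N) :
      Q.head? = some p → p ∈ V → MQStep N (Q, V) (Q.tail, V.erase p)

/-- A state is reachable if obtained from the initial state `([], ∅)` by finitely
many non-broken transitions. -/
def MQReachable (N : ℕ) (s : List (Fin N) × Finset (Fin N)) : Prop :=
  Relation.ReflTransGen (MQStep N) ([], ∅) s

def VisibleSubsetQueue {N : ℕ} (s : List (Fin N) × Finset (Fin N)) : Prop :=
  ∀ p ∈ s.2, p ∈ s.1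

theorem List.mem_tail_of_head?_eq_of_ne {α : Type*} {l : List α} {a b : α}
    (hhead : l.head? = some a) (hmem : b ∈ l) (hne : b ≠ a) : b ∈ l.tail := by
  obtain ⟨t, rfl⟩ : ∃ t, l = a :: t := List.head?_eq_some_iff.mp hhead
  exact (List.mem_cons.mp hmem).resolve_left hne

theorem MQStep.visibleSubsetQueue {N : ℕ} {s t : List (Fin N) × Finset (Fin N)}
    (hst : MQStep N s t) (hs : VisibleSubsetQueue s) : VisibleSubsetQueue t := by
  intro q hq
  cases hst with
  | enqueue Q V p _ => exact List.mem_append_left _ (hs q hq)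
  | isHead Q V p hpQ _ =>
    rcases Finset.mem_insert.mp hq with rfl | hqV
    · exact hpQ
    · exact hs q hqV
  | dequeue Q V p hhead _ =>
    obtain ⟨hne, hqV⟩ := Finset.mem_erase.mp hq
    exact List.mem_tail_of_head?_eq_of_ne hhead (hs q hqV) hne

theorem MQReachable.visibleSubsetQueue {N : ℕ} {s : List (Fin N) × Finset (Fin N)}
    (hs : MQReachable N s) : VisibleSubsetQueue s := by
  induction hs with
  | refl => simp [VisibleSubsetQueue]
  | tail _ hstep ih => exact hstep.visibleSubsetQueue ih

/-- In any reachable (non-broken) MutexQueue state (Q, V), every visible process is in the queue. -/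
theorem visible_mem_queue (N : ℕ) (Q : List (Fin N)) (V : Finset (Fin N))
    (h : MQReachable N (Q, V)) : ∀ p : Fin N, p ∈ V → p ∈ Q :=
  h.visibleSubsetQueue
end

section
/- If the state (Q, V) of a MutexQueue is reachable (not ⊥), then the queue sequence Q contains no duplicate elements: each process ID occurs at most once in Q. -/
theorem MQStep.nodup_fst {N : ℕ} {s t : List (Fin N) × Finset (Fin N)} (hst : MQStep N s t)
    (hs : s.1.Nodup) : t.1.Nodup := by
  cases hst with
  | enqueue Q V p hp => simpa only [List.concat_eq_append] using hs.concat hp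
  | isHead => exact hs
  | dequeue => exact hs.tail

theorem MQReachable.nodup_fst {N : ℕ} {s : List (Fin N) × Finset (Fin N)}
    (hs : MQReachable N s) : s.1.Nodup := by
  induction hs with
  | refl => exact List.nodup_nil
  | tail _ hst ih => exact hst.nodup_fst ih

/-- In any reachable (non-broken) MutexQueue state (Q, V), the queue has no duplicates. -/
theorem queue_nodup (N : ℕ) (Q : List (Fin N)) (V : Finset (Fin N))
    (h : MQReachable N (Q, V)) : Q.Nodup :=
  h.nodup_fst
end

section
/- Suppose processes are enqueued into a duplicate-free queue Q over the process set {0,...,N-1}, and let p and q be two distinct processes both currently in Q where q was enqueued k positions after p (i.e., Q contains p followed by a chain of k successors ending in q). If indices are assigned to enqueue operations by consecutive integers modulo N, and p and q are assigned the same index, then k is a positive multiple of N; but then Q would have length at least N+1, contradicting that Q is a duplicate-free sequence over an N-element set. Hence two distinct processes currently in the queue cannot share the same index. -/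
theorem List.Nodup.length_le_of_fin {N : ℕ} {l : List (Fin N)} (hl : l.Nodup) :
    l.length ≤ N := by
  simpa using hl.length_le_card

theorem Nat.eq_of_add_mod_eq_of_lt {N c a b : ℕ} (ha : a < N) (hb : b < N)
    (h : (c + a) % N = (c + b) % N) : a = b :=
  (Nat.ModEq.add_left_cancel' c h).eq_of_lt_of_lt ha hb

/-- Processes are enqueued into a duplicate-free queue Q over Fin N, with the process at
position t of Q having been assigned counter value c0 + t (consecutive fetch-and-increment
values) and index (c0 + t) mod N.  If two positions in Q carry the same index, they are
the same position (so two distinct processes currently in the queue cannot share an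
index). -/
theorem same_index_same_process (N : ℕ) (Q : List (Fin N)) (hnd : Q.Nodup)
    (c0 : ℕ) (i j : Fin Q.length)
    (hidx : (c0 + (i : ℕ)) % N = (c0 + (j : ℕ)) % N) : i = j := by
  have hlen : Q.length ≤ N := hnd.length_le_of_fin
  exact Fin.ext (Nat.eq_of_add_mod_eq_of_lt (i.2.trans_le hlen) (j.2.trans_le hlen) hidx)
end

section
/- RMR complexity of the waiting loop in Algorithm GQME in the CC model: a process p spinning on Wait[p] incurs at most 2 remote memory references before exiting the loop, given that (i) after p reads Wait[p], subsequent reads by p are local until some other process writes Wait[p], and (ii) the only value any other process writes to Wait[p] is false, and p exits the loop upon reading false. -/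
/-- Events relevant to process p's busy-wait loop on Wait[p] in the CC model:
reads of Wait[p] by p, and writes of false to Wait[p] by other processes. -/
inductive CCEv
  | read
  | write

/-- Position i of es is a read by p. -/
def isRead (es : List CCEv) (i : ℕ) : Prop := es[i]? = some CCEv.read

/-- Position i of es is a write (of false, by another process). -/
def isWrite (es : List CCEv) (i : ℕ) : Prop := es[i]? = some CCEv.write

/-- The value returned by a read at position i is true iff no write of false has yet
occurred (Wait[p] is initially true and others write only false). -/
def returnsTrue (es : List CCEv) (i : ℕ) : Prop := ∀ j < i, ¬ isWrite es j

/-- The read at position i is remote (an RMR) iff p has never read before, or some other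
process has written Wait[p] since p's last read. -/
def remote (es : List CCEv) (i : ℕ) : Prop :=
  isRead es i ∧
    ((∀ j < i, ¬ isRead es j) ∨
      ∃ j < i, isWrite es j ∧ ∀ k, j < k → k < i → ¬ isRead es k)

/-! A read is remote only if it is p's first read or a write of `false` precedes it. So every
remote read after the first returns `false` and ends the loop: of three remote reads within the
loop, the middle one would already have returned `false`. -/

theorem Set.ncard_le_two_of_forall_not_lt_lt {α : Type*} [LinearOrder α] {s : Set α}
    (h : ∀ a ∈ s, ∀ b ∈ s, ∀ c ∈ s, a < b → ¬ b < c) : s.ncard ≤ 2 := by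
  by_contra! hs
  obtain ⟨a, ha, b, hb, c, hc, hab, hac, hbc⟩ :=
    (Set.two_lt_ncard (Set.finite_of_ncard_pos (by omega))).1 hs
  rcases hab.lt_or_gt with hab | hab <;> rcases hac.lt_or_gt with hac | hac <;>
    rcases hbc.lt_or_gt with hbc | hbc <;> grind

theorem not_returnsTrue_of_remote_of_isRead {es : List CCEv} {i j : ℕ} (hi : remote es i)
    (hj : isRead es j) (hji : j < i) : ¬ returnsTrue es i := by
  rcases hi.2 with hfirst | ⟨k, hki, hk, -⟩
  · exact absurd hj (hfirst j hji)
  · exact fun htrue => htrue k hki hk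

/-- In the CC model, the number of remote reads p incurs up to and including its first
read of Wait[p] that returns false is at most 2. -/
theorem spin_rmr_le_two (es : List CCEv) :
    Set.ncard
      {i : ℕ | remote es i ∧ ∀ j < i, ¬ (isRead es j ∧ ¬ returnsTrue es j)} ≤ 2 := by
  refine Set.ncard_le_two_of_forall_not_lt_lt fun a ha b hb c hc hab hbc => ?_
  exact hc.2 b hbc ⟨hb.1.1, not_returnsTrue_of_remote_of_isRead hb.1 ha.1.1 hab⟩
end
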